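/- Let R be a commutative ring, τ ∈ R, and h_0, h_1, ... ∈ R satisfying h_i^2 + τ·h_i = 0 and h_{i+1} = h_i + τ for all i. For n ≤ m define a_{n,m} = h_0^2 ⋯ h_{n-1}^2 · h_n ⋯ h_{m-1}. Then for all 1 ≤ n ≤ m one has the recursion a_{n,m} = a_{n-1,m+1} − (m − n + 1) · τ · a_{n-1,m}. -/

import Mathlib

/-! Both `a_{n,m}` and `a_{n-1,m+1}` are `a_{n-1,m}` times one more factor, `h_{n-1}` and `h_m`
respectively, and these two factors differ by `(m - n + 1) τ`. -/

open Finset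

def sqProd {M : Type*} [CommMonoid M] (h : ℕ → M) (n m : ℕ) : M :=
  (∏ i ∈ range n, h i ^ 2) * ∏ i ∈ Ico n m, h i

section sqProd

variable {M : Type*} [CommMonoid M] (h : ℕ → M)

theorem sqProd_succ_left {k m : ℕ} (hkm : k < m) :
    sqProd h (k + 1) m = sqProd h k m * h k := by
  rw [sqProd, sqProd, prod_range_succ, prod_eq_prod_Ico_succ_bot hkm, sq]
  ac_rfl

theorem sqProd_succ_right {k m : ℕ} (hkm : k ≤ m) :
    sqProd h k (m + 1) = sqProd h k m * h m := by
  rw [sqProd, sqProd, prod_Ico_succ_top hkm, mul_assoc]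

end sqProd

theorem eq_add_mul_of_succ_eq_add {R : Type*} [Semiring R] {τ : R} {h : ℕ → R}
    (hstep : ∀ i, h (i + 1) = h i + τ) (k j : ℕ) : h (k + j) = h k + j * τ := by
  induction j with
  | zero => simp
  | succ j ih => rw [← add_assoc, hstep, ih, Nat.cast_succ, add_one_mul, add_assoc]

theorem stmt_6_general {R : Type*} [CommRing R] (τ : R) (h : ℕ → R)
    (hstep : ∀ i, h (i + 1) = h i + τ)
    (a : ℕ → ℕ → R)
    (ha : ∀ n m, a n m = (∏ i ∈ Finset.range n, h i ^ 2) * ∏ i ∈ Finset.Ico n m, h i)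
    (n m : ℕ) (hn : 1 ≤ n) (hnm : n ≤ m) :
    a n m = a (n - 1) (m + 1) - ((m - n + 1 : ℕ) : R) * τ * a (n - 1) m := by
  obtain rfl : a = sqProd h := funext₂ ha
  obtain ⟨k, rfl⟩ : ∃ k, n = k + 1 := ⟨n - 1, by omega⟩
  have hm : h m = h k + ((m - (k + 1) + 1 : ℕ) : R) * τ := by
    rw [← eq_add_mul_of_succ_eq_add hstep]
    congr 1
    omega
  rw [Nat.add_sub_cancel, sqProd_succ_left h hnm, sqProd_succ_right h (by omega), hm]
  ring

theorem stmt_6 {R : Type*} [CommRing R] (τ : R) (h : ℕ → R)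
    (hsq : ∀ i, h i ^ 2 + τ * h i = 0)
    (hstep : ∀ i, h (i + 1) = h i + τ)
    (a : ℕ → ℕ → R)
    (ha : ∀ n m, a n m = (∏ i ∈ Finset.range n, h i ^ 2) * ∏ i ∈ Finset.Ico n m, h i)
    (n m : ℕ) (hn : 1 ≤ n) (hnm : n ≤ m) :
    a n m = a (n - 1) (m + 1) - ((m - n + 1 : ℕ) : R) * τ * a (n - 1) m :=
  stmt_6_general τ h hstep a ha n m hn hnm
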